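/- arXiv:1406.1310 — 3 statements merged into one kernel-verified Lean document; each statement's English description precedes it below -/
import Mathlib

section
/- For any function x : Fin p → Fin p, and any n ≥ p - 1, the iterate x^n equals x^(n + lcm(1,...,p)), where lcm(1,...,p) denotes the least common multiple of the integers 1 through p. -/
/-! By pigeonhole, among the first `p + 1` points of the orbit of `a` two coincide, say
`x^[i] a = x^[i + c] a` with `0 < c` and `i + c ≤ p`. So from time `i ≤ p - 1` on the orbit is
periodic with period `c ∈ [1, p]`, and `c` divides `lcm(1, …, p)`. -/

namespace Function

variable {α : Type*} [Fintype α]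

theorem exists_add_le_card_isPeriodicPt_iterate (f : α → α) (a : α) :
    ∃ i c, 0 < c ∧ i + c ≤ Fintype.card α ∧ IsPeriodicPt f c (f^[i] a) := by
  obtain ⟨k, l, hkl, heq⟩ := Fintype.exists_ne_map_eq_of_card_lt
    (fun k : Fin (Fintype.card α + 1) => f^[k] a) (by simp)
  have hperiodic {i j : ℕ} (hij : i < j) (heq : f^[i] a = f^[j] a) :
      IsPeriodicPt f (j - i) (f^[i] a) := by
    rw [IsPeriodicPt, IsFixedPt, ← iterate_add_apply, Nat.sub_add_cancel hij.le, heq]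
  rcases Fin.val_ne_iff.mpr hkl |>.lt_or_gt with hlt | hlt
  · exact ⟨k, l - k, by omega, by omega, hperiodic hlt heq⟩
  · exact ⟨l, k - l, by omega, by omega, hperiodic hlt heq.symm⟩

theorem iterate_add_eq_of_forall_dvd (f : α → α) {L n : ℕ}
    (hL : ∀ k ∈ Finset.Icc 1 (Fintype.card α), k ∣ L) (hn : Fintype.card α - 1 ≤ n) :
    f^[n + L] = f^[n] := by
  funext a
  obtain ⟨i, c, hc, hic, hper⟩ := exists_add_le_card_isPeriodicPt_iterate f a
  have hperL : IsPeriodicPt f L (f^[n] a) := by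
    have := (hper.trans_dvd (hL c (Finset.mem_Icc.mpr ⟨hc, by omega⟩))).apply_iterate (n - i)
    rwa [← iterate_add_apply, Nat.sub_add_cancel (by omega)] at this
  rw [add_comm, iterate_add_apply]
  exact hperL

end Function

theorem iterate_eq_add_lcm_general (p : ℕ) (x : Fin p → Fin p) (n : ℕ)
    (hn : p - 1 ≤ n) :
    x^[n] = x^[n + Finset.lcm (Finset.Icc 1 p) id] := by
  refine (Function.iterate_add_eq_of_forall_dvd x (fun k hk => ?_) (by simpa using hn)).symm
  exact Finset.dvd_lcm (by simpa using hk)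

theorem iterate_eq_add_lcm (p : ℕ) (hp : 0 < p) (x : Fin p → Fin p) (n : ℕ)
    (hn : p - 1 ≤ n) :
    x^[n] = x^[n + Finset.lcm (Finset.Icc 1 p) id] :=
  iterate_eq_add_lcm_general p x n hn
end

section
/- The number of distinct maps n ↦ (λ x, x^n) on functions Fin p → Fin p for n ≥ 0, where x^n denotes the n-th iterate of the self-map x, is exactly lcm(1,...,p) + p - 1; equivalently, the map sending n to the function F_n : (Fin p → Fin p) → (Fin p → Fin p), F_n(x) = x^n, satisfies F_n = F_{n + lcm(1,...,p)} for all n ≥ p - 1, and the functions F_0, F_1, ..., F_{p-2+lcm(1,...,p)} are pairwise distinct. -/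
private lemma iter_stab {α : Type*} (x : α → α) (a : α) (i c : ℕ)
    (h : x^[i + c] a = x^[i] a) : ∀ t : ℕ, x^[i + t * c] a = x^[i] a := by
  intro t
  induction t with
  | zero => simp
  | succ t ih =>
    have : i + (t + 1) * c = c + (i + t * c) := by ring
    rw [this, Function.iterate_add_apply, ih, ← Function.iterate_add_apply]
    rw [show c + i = i + c by ring, h]

private lemma iter_per {α : Type*} (x : α → α) (a : α) {i c n L : ℕ}
    (h : x^[i + c] a = x^[i] a) (hc : c ∣ L) (hn : i ≤ n) :
    x^[n + L] a = x^[n] a := by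
  obtain ⟨t, rfl⟩ := hc
  have h1 : n + c * t = (n - i) + (i + t * c) := by rw [Nat.mul_comm]; omega
  rw [h1, Function.iterate_add_apply, iter_stab x a i c h t,
    ← Function.iterate_add_apply]
  congr 1
  omega

theorem count_iteration_operators (p : ℕ) (hp : 0 < p) :
    (∀ n : ℕ, p - 1 ≤ n →
      (fun x : Fin p → Fin p => x^[n]) =
        (fun x : Fin p → Fin p => x^[n + Finset.lcm (Finset.Icc 1 p) id])) ∧
    (∀ m n : ℕ, m < p - 1 + Finset.lcm (Finset.Icc 1 p) id →
      n < p - 1 + Finset.lcm (Finset.Icc 1 p) id → m ≠ n →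
      (fun x : Fin p → Fin p => x^[m]) ≠ (fun x : Fin p → Fin p => x^[n])) := by
  set L := Finset.lcm (Finset.Icc 1 p) id with hL
  constructor
  · -- periodicity
    intro n hn
    funext x
    funext a
    -- pigeonhole: find repeat
    have hcard : Fintype.card (Fin p) < Fintype.card (Fin (p + 1)) := by simp
    obtain ⟨i, j, hij, hfe⟩ :=
      Fintype.exists_ne_map_eq_of_card_lt (fun k : Fin (p + 1) => x^[k.val] a) hcard
    wlog hlt : i.val < j.val generalizing i j
    · have hne : i.val ≠ j.val := fun h => hij (Fin.ext h)
      exact this j i hij.symm hfe.symm (by omega)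
    · have hc : x^[i.val + (j.val - i.val)] a = x^[i.val] a := by
        rw [show i.val + (j.val - i.val) = j.val by omega]
        exact hfe.symm
      have hmem : (j.val - i.val) ∈ Finset.Icc 1 p := by
        have := j.isLt
        simp only [Finset.mem_Icc]
        omega
      have hdvd : (j.val - i.val) ∣ L := by
        simpa using Finset.dvd_lcm (f := id) hmem
      have hiple : i.val ≤ n := by
        have := j.isLt
        omega
      exact (iter_per x a hc hdvd hiple).symm
  · -- distinctness
    have key : ∀ m n : ℕ, m < n → n < p - 1 + L →
        (fun x : Fin p → Fin p => x^[m]) ≠ (fun x : Fin p → Fin p => x^[n]) := by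
      intro m n hmn hnlt hEq
      by_cases hm : m < p - 1
      · -- tail map
        set x : Fin p → Fin p := fun i =>
          if h : i.val + 1 < p then ⟨i.val + 1, h⟩ else i with hx
        have hiter : ∀ j : ℕ, x^[j] ⟨0, hp⟩ = ⟨min j (p - 1), by omega⟩ := by
          intro j
          induction j with
          | zero => simp
          | succ j ih =>
            rw [Function.iterate_succ_apply', ih, hx]
            by_cases h : min j (p - 1) + 1 < p
            · simp only [dif_pos h]
              congr 1
              omega
            · simp only [dif_neg h]
              congr 1
              omega
        have := congrFun (congrFun hEq x) ⟨0, hp⟩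
        rw [hiter m, hiter n] at this
        have hv : min m (p - 1) = min n (p - 1) := Fin.mk.inj_iff.mp this
        omega
      · -- both ≥ p-1, cycle map
        have hd : ¬ L ∣ (n - m) := by
          intro hdvd
          have := Nat.le_of_dvd (by omega) hdvd
          omega
        obtain ⟨k, hk, hknd⟩ : ∃ k ∈ Finset.Icc 1 p, ¬ (k ∣ n - m) := by
          by_contra hall
          push_neg at hall
          exact hd (hL ▸ Finset.lcm_dvd (fun k hk => hall k hk))
        simp only [Finset.mem_Icc] at hk
        have hk0 : 0 < k := hk.1
        have hkp : k ≤ p := hk.2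
        set x : Fin p → Fin p := fun i =>
          if h : i.val < k then ⟨(i.val + 1) % k, lt_of_lt_of_le (Nat.mod_lt _ hk0) hkp⟩
          else i with hx
        have hiter : ∀ j : ℕ, x^[j] ⟨0, hp⟩ =
            ⟨j % k, lt_of_lt_of_le (Nat.mod_lt _ hk0) hkp⟩ := by
          intro j
          induction j with
          | zero => simp [Nat.zero_mod]
          | succ j ih =>
            rw [Function.iterate_succ_apply', ih, hx]
            have hjk : j % k < k := Nat.mod_lt _ hk0
            simp only [dif_pos hjk]
            congr 1
            conv_rhs => rw [Nat.add_mod]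
            rw [Nat.add_mod (j % k) 1 k, Nat.mod_mod_of_dvd j (dvd_refl k)]
        have := congrFun (congrFun hEq x) ⟨0, hp⟩
        rw [hiter m, hiter n] at this
        have hv : m % k = n % k := Fin.mk.inj_iff.mp this
        exact hknd ((Nat.modEq_iff_dvd' (le_of_lt hmn)).mp hv)
    intro m n hm hn hne
    rcases lt_or_gt_of_ne hne with h | h
    · exact key m n h hn
    · exact fun hEq => key n m h hm hEq.symm
end

section
/- Let K be a finite field. For finite-dimensional K-vector spaces A, B, C, there is a natural K-linear isomorphism between the space of linear maps !(A × B) → C and the space of linear maps !A → Hom(!B, C), where Hom denotes the space of K-linear maps; i.e., the coKleisli category of the ! comonad on finite-dimensional K-vector spaces is cartesian closed with exponential object Hom(!B, C). -/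
namespace Finsupp

variable (R : Type*) [CommSemiring R] (α β : Type*) (M : Type*) [AddCommMonoid M] [Module R M]

noncomputable def prodLinearMapEquiv :
    ((α × β →₀ R) →ₗ[R] M) ≃ₗ[R] ((α →₀ R) →ₗ[R] (β →₀ R) →ₗ[R] M) :=
  LinearEquiv.arrowCongr (finsuppTensorFinsupp' R α β).symm (LinearEquiv.refl R M) ≪≫ₗ
    (TensorProduct.lift.equiv (.id R) (α →₀ R) (β →₀ R) M).symm

@[simp]
theorem prodLinearMapEquiv_single_single (f : (α × β →₀ R) →ₗ[R] M) (a : α) (b : β) :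
    prodLinearMapEquiv R α β M f (Finsupp.single a 1) (Finsupp.single b 1) =
      f (Finsupp.single (a, b) 1) := by
  simp [prodLinearMapEquiv, finsuppTensorFinsupp'_single_tmul_single]

end Finsupp

theorem coKleisli_cartesian_closed_general (K : Type*) [Field K]
    (A B C : Type*) [AddCommGroup C] [Module K C] :
    ∃ e : (((A × B) →₀ K) →ₗ[K] C) ≃ₗ[K] ((A →₀ K) →ₗ[K] ((B →₀ K) →ₗ[K] C)),
      ∀ (f : ((A × B) →₀ K) →ₗ[K] C) (u : A) (v : B),
        e f (Finsupp.single u 1) (Finsupp.single v 1) = f (Finsupp.single (u, v) 1) :=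
  ⟨Finsupp.prodLinearMapEquiv K A B C, Finsupp.prodLinearMapEquiv_single_single K A B C⟩

theorem coKleisli_cartesian_closed (K : Type*) [Field K] [Fintype K]
    (A B C : Type*) [AddCommGroup A] [Module K A] [FiniteDimensional K A]
    [AddCommGroup B] [Module K B] [FiniteDimensional K B]
    [AddCommGroup C] [Module K C] [FiniteDimensional K C] :
    ∃ e : (((A × B) →₀ K) →ₗ[K] C) ≃ₗ[K] ((A →₀ K) →ₗ[K] ((B →₀ K) →ₗ[K] C)),
      ∀ (f : ((A × B) →₀ K) →ₗ[K] C) (u : A) (v : B),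
        e f (Finsupp.single u 1) (Finsupp.single v 1) = f (Finsupp.single (u, v) 1) :=
  coKleisli_cartesian_closed_general K A B C
end
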